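/- Let h > 0 and w > 0, let x₁, …, xₙ be real numbers with h/2 < xᵢ ≤ h for all i, and let x be a real number with h/2 < x ≤ h such that x₁ + ⋯ + xₙ + x > w. Then x₁² + ⋯ + xₙ² + x² > (w − h/2)·h/2. (A closed shelf, with the extra area of its overflowing square assigned to it, has density at least 1/2 on the shelf minus its final slice of width h/2.) -/

import Mathlib

/-! Every packed side satisfies `xᵢ > h/2`, hence `xᵢ² ≥ (h/2)·xᵢ`, so the packed area is at least
`h/2` times the packed width `∑ xᵢ > w − x`. The overflowing square makes up the rest, since
`(h/2)·x ≤ x² + (h/2)²` for every real `x`. -/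

open Finset

theorem mul_sum_le_sum_sq {ι α : Type*} [CommRing α] [LinearOrder α] [IsStrictOrderedRing α]
    (s : Finset ι) {f : ι → α} {c : α} (hc : 0 ≤ c) (hf : ∀ i ∈ s, c ≤ f i) :
    c * ∑ i ∈ s, f i ≤ ∑ i ∈ s, f i ^ 2 := by
  rw [mul_sum]
  refine sum_le_sum fun i hi => ?_
  rw [sq]
  exact mul_le_mul_of_nonneg_right (hf i hi) (hc.trans (hf i hi))

theorem closed_shelf_density_general (h w : ℝ) (hh : 0 < h)
    (n : ℕ) (xs : Fin n → ℝ) (hxs : ∀ i, h / 2 < xs i ∧ xs i ≤ h)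
    (x : ℝ)
    (hover : (∑ i, xs i) + x > w) :
    (∑ i, (xs i) ^ 2) + x ^ 2 > (w - h / 2) * h / 2 := by
  have hpacked : h / 2 * ∑ i, xs i ≤ ∑ i, xs i ^ 2 :=
    mul_sum_le_sum_sq univ (by positivity) fun i _ => (hxs i).1.le
  have hlast : h / 2 * x ≤ x ^ 2 + (h / 2) ^ 2 := by nlinarith [two_mul_le_add_sq x (h / 2)]
  calc (w - h / 2) * h / 2 < ((∑ i, xs i) + x - h / 2) * (h / 2) := by
        rw [mul_div_assoc]; gcongr
    _ = h / 2 * ∑ i, xs i + h / 2 * x - (h / 2) ^ 2 := by ring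
    _ ≤ (∑ i, xs i ^ 2) + x ^ 2 := by linarith

/-- A closed shelf, with the extra area of the overflowing square assigned to it, has
density at least 1/2 on the shelf minus its final slice of width `h/2`: if squares of
side lengths `x₁, …, xₙ ∈ (h/2, h]` are packed into a shelf of width `w` and height
`h`, and a further square of side `x ∈ (h/2, h]` does not fit, then
`x₁² + ⋯ + xₙ² + x² > (w − h/2)·h/2`. -/
theorem closed_shelf_density (h w : ℝ) (hh : 0 < h) (hw : 0 < w)
    (n : ℕ) (xs : Fin n → ℝ) (hxs : ∀ i, h / 2 < xs i ∧ xs i ≤ h)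
    (x : ℝ) (hx₁ : h / 2 < x) (hx₂ : x ≤ h)
    (hover : (∑ i, xs i) + x > w) :
    (∑ i, (xs i) ^ 2) + x ^ 2 > (w - h / 2) * h / 2 :=
  closed_shelf_density_general h w hh n xs hxs x hover
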